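/- Paths of length l from the input labelled 0^k in the spider-web graph G_{b,k} are in bijection with strings t_1⋯t_{k+l} over {0,…,b-1} whose first k digits are 0, via: t_1⋯t_k is the label of the rank-0 vertex, and for 1 ≤ m ≤ l, t_{k+m} is the digit in position j ≡ m (mod k) of the rank-m vertex; under this bijection, the rank-m vertex of the path has label t_{m+1}⋯t_{m+k}. -/

import Mathlib

/-- `stepOK b k l u` : consecutive labels along `u` differ at most in position
with 0-based index `(m-1) % k` at stage `m`. -/
def stepOK (b k l : ℕ) (u : Fin (l + 1) → Fin k → Fin b) : Prop :=
  ∀ m : Fin l, ∀ i : Fin k, (i : ℕ) ≠ (m : ℕ) % k → u m.castSucc i = u m.succ i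

/-- Paths of length `l` in the infinite spider-web graph `G_{b,k}` starting at
the input labelled `0^k`. -/
def SpiderPathFromZero (b k l : ℕ) [NeZero b] : Type :=
  { u : Fin (l + 1) → Fin k → Fin b // u 0 = (fun _ => 0) ∧ stepOK b k l u }

/-- Strings `t_1 ⋯ t_{k+l}` over `{0,…,b-1}` whose first `k` digits are `0`. -/
def ZeroPrefixString (b k l : ℕ) [NeZero b] : Type :=
  { t : Fin (k + l) → Fin b // ∀ i : Fin (k + l), (i : ℕ) < k → t i = 0 }

/-!
The digit in position `i` of the rank-`m` vertex of a path is the one written at the last stage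
`s ≤ m` with `(s - 1) % k = i` (or the initial `0`). Recording the digit written at stage `s` at
string index `s + k - 1`, it is the digit at the unique index in `[m, m + k)` congruent to `i`
modulo `k`. So a path is determined by the digits its stages write, and conversely every string
with zero prefix is read as a path through a sliding window of width `k`.
-/

theorem Nat.ModEq.eq_of_le_of_lt_add {k m a c : ℕ} (h : a ≡ c [MOD k]) (hma : m ≤ a)
    (hmc : m ≤ c) (ha : a < m + k) (hc : c < m + k) : a = c := by
  have hsub : a - m ≡ c - m [MOD k] :=
    Nat.ModEq.add_right_cancel' m (by rwa [Nat.sub_add_cancel hma, Nat.sub_add_cancel hmc])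
  have := hsub.eq_of_lt_of_lt (by omega) (by omega)
  omega

namespace SpiderWeb

/-- For `i < k`, the unique index in `[m, m + k)` congruent to `i` modulo `k`. -/
def digitIndex (k m i : ℕ) : ℕ := m + (i + k - m % k) % k

section digitIndex

variable {k m i n : ℕ}

theorem le_digitIndex : m ≤ digitIndex k m i := Nat.le_add_right _ _

theorem digitIndex_lt (hk : 0 < k) : digitIndex k m i < m + k :=
  Nat.add_lt_add_left (Nat.mod_lt _ hk) m

theorem digitIndex_modEq (hk : 0 < k) : digitIndex k m i ≡ i [MOD k] := by
  have hdecomp : m + (i + k - m % k) = i + k * (m / k + 1) := by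
    have := Nat.div_add_mod m k
    have := Nat.mod_lt m hk
    rw [mul_add]
    omega
  calc digitIndex k m i ≡ m + (i + k - m % k) [MOD k] := (Nat.mod_modEq _ k).add_left m
    _ = i + k * (m / k + 1) := hdecomp
    _ ≡ i [MOD k] := Nat.add_mul_mod_self_left i k _

theorem eq_digitIndex (hn : n ≡ i [MOD k]) (hmn : m ≤ n) (hnm : n < m + k) :
    n = digitIndex k m i :=
  have hk : 0 < k := by omega
  (hn.trans (digitIndex_modEq hk).symm).eq_of_le_of_lt_add hmn le_digitIndex hnm (digitIndex_lt hk)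

theorem digitIndex_zero (hi : i < k) : digitIndex k 0 i = i :=
  (eq_digitIndex rfl (Nat.zero_le i) (by omega)).symm

theorem digitIndex_succ_of_ne (hi : i < k) (hne : i ≠ m % k) :
    digitIndex k (m + 1) i = digitIndex k m i := by
  have hk : 0 < k := by omega
  have hmod : digitIndex k m i ≡ i [MOD k] := digitIndex_modEq hk
  -- index `m` carries digit `m % k ≠ i`, so `digitIndex k m i` lies in `[m + 1, m + k)`
  have hm : digitIndex k m i ≠ m := fun h =>
    hne ((Nat.mod_eq_of_lt hi).symm.trans (h ▸ hmod).symm)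
  have hlo : m ≤ digitIndex k m i := le_digitIndex
  have hhi : digitIndex k m i < m + k := digitIndex_lt hk
  exact (eq_digitIndex hmod (by omega) (by omega)).symm

theorem digitIndex_succ_mod_self (hk : 0 < k) : digitIndex k (m + 1) (m % k) = m + k :=
  (eq_digitIndex (by simp [Nat.ModEq]) (by omega) (by omega)).symm

end digitIndex

variable {b k l : ℕ} [NeZero b]

def digitPos (m : Fin (l + 1)) (i : Fin k) : Fin (k + l) :=
  ⟨digitIndex k m i, by have := digitIndex_lt (m := m) (i := i) i.pos; omega⟩

def pathOfString (t : ZeroPrefixString b k l) : SpiderPathFromZero b k l :=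
  ⟨fun m i => t.1 (digitPos m i),
    funext fun i => t.2 _ (by simp [digitPos, digitIndex_zero i.isLt]),
    fun m i hne => congrArg t.1 (Fin.ext (digitIndex_succ_of_ne i.isLt hne).symm)⟩

/-- Index `j ≥ k` of the string records the digit written at stage `j - k + 1`, in
position `j % k`. -/
def stringOfPath (hk : 0 < k) (u : SpiderPathFromZero b k l) : ZeroPrefixString b k l :=
  ⟨fun j => if h : (j : ℕ) < k then 0
    else u.1 ⟨j - k + 1, by omega⟩ ⟨j % k, Nat.mod_lt _ hk⟩,
    fun _ hj => dif_pos hj⟩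

theorem stringOfPath_digitPos (hk : 0 < k) (u : SpiderPathFromZero b k l) (m : Fin (l + 1))
    (i : Fin k) : (stringOfPath hk u).1 (digitPos m i) = u.1 m i := by
  induction m using Fin.induction generalizing i with
  | zero =>
    have hi : digitIndex k 0 i < k := by rw [digitIndex_zero i.isLt]; exact i.isLt
    rw [u.2.1]
    exact dif_pos hi
  | succ m ih =>
    by_cases hi : (i : ℕ) = m % k
    · have hidx : (digitPos m.succ i : ℕ) = m + k := by
        change digitIndex k (m + 1) i = m + k
        rw [hi]
        exact digitIndex_succ_mod_self hk
      simp only [stringOfPath, hidx, show ¬ m + k < k by omega, dite_false]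
      exact congrArg₂ u.1 (Fin.ext (by simp)) (Fin.ext (by simp [hi]))
    · have hpos : digitPos m.succ i = digitPos m.castSucc i :=
        Fin.ext (digitIndex_succ_of_ne i.isLt hi)
      rw [hpos, ih, u.2.2 m i hi]

theorem stringOfPath_pathOfString (hk : 0 < k) (t : ZeroPrefixString b k l) :
    stringOfPath hk (pathOfString t) = t := by
  refine Subtype.ext (funext fun j => ?_)
  by_cases hj : (j : ℕ) < k
  · simp only [stringOfPath, dif_pos hj]
    exact (t.2 j hj).symm
  · simp only [stringOfPath, dif_neg hj]
    refine congrArg t.1 (Fin.ext ?_)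
    change digitIndex k (j - k + 1) (j % k) = j
    exact (eq_digitIndex (Nat.mod_modEq j k).symm (by omega) (by omega)).symm

def pathEquivString (hk : 0 < k) : SpiderPathFromZero b k l ≃ ZeroPrefixString b k l where
  toFun := stringOfPath hk
  invFun := pathOfString
  left_inv u := Subtype.ext (funext₂ (stringOfPath_digitPos hk u))
  right_inv := stringOfPath_pathOfString hk

end SpiderWeb

/-- Paths of length `l` from the input `0^k` of `G_{b,k}` are in bijection with
strings of length `k + l` whose first `k` digits are `0`; under the bijection
the rank-`m` vertex of the path has label `t_{m+1} ⋯ t_{m+k}` (read cyclically: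
its digit in 0-based position `i` is `t` at 0-based index `m + ((i + k - m % k) % k)`;
in particular `t_1 ⋯ t_k` is the label of the rank-0 vertex and `t_{k+m}` is the
digit in position `j ≡ m (mod k)` of the rank-`m` vertex). -/
theorem spiderweb_path_string_bijection (b k l : ℕ) (hk : 1 ≤ k)
    [NeZero b] :
    ∃ e : SpiderPathFromZero b k l ≃ ZeroPrefixString b k l,
      ∀ (u : SpiderPathFromZero b k l) (m : Fin (l + 1)) (i : Fin k),
        u.val m i = (e u).val
          ⟨(m : ℕ) + (((i : ℕ) + k - (m : ℕ) % k) % k), by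
            have h1 := m.isLt
            have h2 := Nat.mod_lt ((i : ℕ) + k - (m : ℕ) % k) i.pos
            omega⟩ :=
  ⟨SpiderWeb.pathEquivString hk, fun u m i => (SpiderWeb.stringOfPath_digitPos hk u m i).symm⟩
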